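/- Let G be an infinite discrete group admitting an infinite normal subgroup H which is maximally almost periodic. Then G admits a free, minimal G-flow with the separated covering property. -/

import Mathlib

open Pointwise

section Defs

variable (G : Type*) [Group G]

/-- The right-shift of `G` on `G → A`: `(g • z) h = z (h * g)`. -/
instance (priority := high) shiftSMul (A : Type*) : SMul G (G → A) :=
  ⟨fun g z h => z (h * g)⟩

/-- The right-shift action of `G` on `G → A` is a `G`-action (the Bernoulli flow when
`A = Bool`). -/
instance shiftMulAction (A : Type*) : MulAction G (G → A) where
  one_smul z := funext fun h => by show z (h * 1) = z h; rw [mul_one]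
  mul_smul g₁ g₂ z := funext fun h => by
    show z (h * (g₁ * g₂)) = z (h * g₁ * g₂)
    rw [mul_assoc]

/-- `S ⊆ G` is `D`-separated if `Dg ∩ Dh = ∅` for all distinct `g, h ∈ S`. -/
def DSeparated (D S : Set G) : Prop :=
  ∀ g ∈ S, ∀ h ∈ S, g ≠ h → Disjoint (D * ({g} : Set G)) (D * ({h} : Set G))

/-- The separated covering property for a `G`-flow `X`: for every finite `D ⊆ G`
and every nonempty open `U ⊆ X` there is a `D`-separated `S ⊆ G` with `S⁻¹U = X`. -/
def SCP (X : Type*) [TopologicalSpace X] [MulAction G X] : Prop :=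
  ∀ D : Set G, D.Finite → ∀ U : Set X, IsOpen U → U.Nonempty →
    ∃ S : Set G, DSeparated G D S ∧ ∀ x : X, ∃ s ∈ S, s • x ∈ U

/-- A `G`-flow is minimal if every orbit is dense. -/
def IsMinimalFlow (X : Type*) [TopologicalSpace X] [MulAction G X] : Prop :=
  ∀ x : X, Dense (MulAction.orbit G x)

/-- Two `G`-flows `X` and `Y` are disjoint if the only closed `G`-invariant subset of
`X × Y` projecting onto both factors is `X × Y` itself. -/
def FlowsDisjoint (X Y : Type*) [TopologicalSpace X] [TopologicalSpace Y]
    [MulAction G X] [MulAction G Y] : Prop :=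
  ∀ J : Set (X × Y), IsClosed J → (∀ (g : G), ∀ p ∈ J, g • p ∈ J) →
    Prod.fst '' J = Set.univ → Prod.snd '' J = Set.univ → J = Set.univ

end Defs

universe u v

/-- A bundled `G`-flow carrier: a type with a topology and a `G`-action. -/
structure GFlow (G : Type u) [Group G] : Type (u + 1) where
  carrier : Type u
  [topology : TopologicalSpace carrier]
  [mulAction : MulAction G carrier]

attribute [instance] GFlow.topology GFlow.mulAction

/-- A bundled compact Hausdorff topological group. -/
structure CompactGroup : Type (u + 1) where
  carrier : Type u
  [group : Group carrier]
  [topology : TopologicalSpace carrier]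
  [topGroup : IsTopologicalGroup carrier]
  [compact : CompactSpace carrier]
  [t2 : T2Space carrier]

attribute [instance] CompactGroup.group CompactGroup.topology CompactGroup.topGroup
  CompactGroup.compact CompactGroup.t2

/-- A group `H` is maximally almost periodic if it embeds (by an injective homomorphism)
into a compact Hausdorff topological group. -/
def IsMaxap (H : Type u) [Group H] : Prop :=
  ∃ (K : CompactGroup.{u}) (f : H →* K.carrier), Function.Injective f

/-!
Embed `H` into a compact group `K` by `f`. The maps `z : G → K` with `z (h * x) = f h * z x`,
with `G` acting by right shifts, form a compact `G`-flow `Y` on which `h ∈ H` acts by left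
multiplication with `x ↦ f (x * h * x⁻¹)`, an element of the compact group `G → K`. As `H` is
infinite, every neighbourhood of the identity of `G → K` contains infinitely many of these
elements, so infinitely many `τ ∈ H` move all points of `Y` only slightly.

Take a minimal subflow `X` of `Y × β(G ⧸ H)`. It is free: an element outside `H` fixes no
ultrafilter on `G ⧸ H`, since a finite colouring separates every point from its translate, and an
element of `H` fixing a point of `Y` lies in the kernel of `f`. For SCP, shrink `U` to an open `V`
that all small `τ` move into `U`; finitely many translates `g⁻¹ V` cover `X`, and replacing each
`g` by `τ * g` for a small `τ`, chosen greedily among infinitely many, makes the translating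
elements `D`-separated.
-/
open Filter Topology

namespace Ultrafilter

instance instMulAction {M α : Type*} [Monoid M] [MulAction M α] : MulAction M (Ultrafilter α) where
  smul m u := u.map (m • ·)
  one_smul u := by
    change u.map (fun x => (1 : M) • x) = u
    simp only [one_smul, map_id']
  mul_smul m n u := by
    change u.map (fun x => (m * n) • x) = (u.map (n • ·)).map (m • ·)
    simp only [mul_smul, map_map, Function.comp_def]

theorem smul_def {M α : Type*} [Monoid M] [MulAction M α] (m : M) (u : Ultrafilter α) :
    m • u = u.map (m • ·) := rfl

theorem continuous_map {α β : Type*} (m : α → β) : Continuous (map m : Ultrafilter α → _) :=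
  ultrafilterBasis_is_basis.continuous_iff.2 <| by
    rintro _ ⟨s, rfl⟩
    exact ultrafilter_isOpen_basic (m ⁻¹' s)

instance {M α : Type*} [Monoid M] [MulAction M α] : ContinuousConstSMul M (Ultrafilter α) :=
  ⟨fun m => continuous_map (m • ·)⟩

theorem map_ne_self_of_coloring {α β : Type*} [Finite β] {f : α → α} (χ : α → β)
    (hχ : ∀ x, χ (f x) ≠ χ x) (u : Ultrafilter α) : u.map f ≠ u := by
  intro hu
  obtain ⟨b, hb⟩ := (u.map χ).eq_pure_of_finite
  have hχb : χ ⁻¹' {b} ∈ u := mem_map.1 (hb ▸ rfl : {b} ∈ u.map χ)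
  have hfχb : f ⁻¹' (χ ⁻¹' {b}) ∈ u := mem_map.1 (hu.symm ▸ hχb)
  obtain ⟨x, hx, hfx⟩ := nonempty_of_mem (inter_mem hχb hfχb)
  exact hχ x (hfx.trans hx.symm)

end Ultrafilter

theorem exists_zmod_coloring_of_dvd {Γ α : Type*} [Group Γ] [MulAction Γ α] (γ : Γ) {p : ℕ}
    (hγ : ∀ (k : ℤ) (x : α), γ ^ k • x = x → (p : ℤ) ∣ k) :
    ∃ χ : α → ZMod p, ∀ x, χ (γ • x) + 1 = χ x := by
  -- Colour `x` by an exponent `k` sending it to the chosen point of its `⟨γ⟩`-orbit: along `γ`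
  -- it drops by one, up to an exponent fixing `x`.
  let r := MulAction.orbitRel (Subgroup.zpowers γ) α
  have hexp (x : α) : ∃ k : ℤ, γ ^ k • x = (Quotient.mk r x).out := by
    obtain ⟨⟨_, k, rfl⟩, hk⟩ := Quotient.mk_out (s := r) x
    exact ⟨k, hk⟩
  choose e he using hexp
  refine ⟨fun x => e x, fun x => ?_⟩
  have hsame : Quotient.mk r (γ • x) = Quotient.mk r x :=
    Quotient.sound ⟨⟨γ, Subgroup.mem_zpowers γ⟩, rfl⟩
  have hfix : γ ^ (e (γ • x) + 1 - e x) • x = x := by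
    have h := (he (γ • x)).trans ((congrArg Quotient.out hsame).trans (he x).symm)
    rw [show γ ^ (e (γ • x) + 1 - e x) = (γ ^ e x)⁻¹ * (γ ^ e (γ • x) * γ) by group,
      mul_smul, mul_smul, h, inv_smul_smul]
  have := (ZMod.intCast_zmod_eq_zero_iff_dvd _ p).2 (hγ _ x hfix)
  push_cast at this
  linear_combination this

theorem Ultrafilter.smul_ne_self {Γ α : Type*} [Group Γ] [MulAction Γ α] {γ : Γ} {n : ℕ}
    (hn : n ≠ 1) (hγ : ∀ (k : ℤ) (x : α), γ ^ k • x = x → (n : ℤ) ∣ k) (u : Ultrafilter α) :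
    γ • u ≠ u := by
  -- `n.minFac` is a prime dividing `n`, also for `n = 0`, where it is `2`.
  have : Fact n.minFac.Prime := ⟨Nat.minFac_prime hn⟩
  obtain ⟨χ, hχ⟩ := exists_zmod_coloring_of_dvd γ (p := n.minFac)
    fun k x hx => (Int.natCast_dvd_natCast.2 n.minFac_dvd).trans (hγ k x hx)
  exact u.map_ne_self_of_coloring χ fun x hx =>
    one_ne_zero (α := ZMod n.minFac) (by simpa [hx] using hχ x)

section Quotient

variable {G : Type*} [Group G] {H : Subgroup G} [H.Normal]

theorem QuotientGroup.smul_eq_mk_mul (g : G) (x : G ⧸ H) : g • x = (g : G ⧸ H) * x := by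
  induction x using QuotientGroup.induction_on
  rfl

theorem Ultrafilter.smul_quotient_eq_self_of_mem {g : G} (hg : g ∈ H) (u : Ultrafilter (G ⧸ H)) :
    g • u = u := by
  simp only [Ultrafilter.smul_def, QuotientGroup.smul_eq_mk_mul,
    (QuotientGroup.eq_one_iff g).2 hg, one_mul, Ultrafilter.map_id']

theorem Ultrafilter.mem_of_smul_quotient_eq_self {g : G} {u : Ultrafilter (G ⧸ H)}
    (hu : g • u = u) : g ∈ H := by
  by_contra hg
  refine Ultrafilter.smul_ne_self (n := orderOf (g : G ⧸ H)) ?_ (fun k x hx => ?_) u hu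
  · rwa [Ne, orderOf_eq_one_iff, QuotientGroup.eq_one_iff]
  · rw [QuotientGroup.smul_eq_mk_mul, mul_eq_right, QuotientGroup.mk_zpow] at hx
    exact orderOf_dvd_iff_zpow_eq_one.2 hx

end Quotient

section Separated

variable {G : Type*} [Group G] {D : Set G}

theorem disjoint_mul_singleton_of_notMem {g h : G} (hg : g ∉ D⁻¹ * D * {h}) :
    Disjoint (D * {g}) (D * {h}) := by
  rw [Set.mul_singleton] at hg ⊢
  rw [Set.mul_singleton, Set.disjoint_left]
  rintro _ ⟨d₁, hd₁, rfl⟩ ⟨d₂, hd₂, he⟩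
  simp only at he
  exact hg ⟨d₁⁻¹ * d₂, Set.mul_mem_mul (Set.inv_mem_inv.2 hd₁) hd₂, by
    simp only [mul_assoc, he, inv_mul_cancel_left]⟩

theorem DSeparated.insert {S : Set G} (hS : DSeparated G D S) {g : G} (hg : g ∉ D⁻¹ * D * S) :
    DSeparated G D (insert g S) := by
  have hgS : ∀ h ∈ S, Disjoint (D * {g}) (D * {h}) := fun h hh =>
    disjoint_mul_singleton_of_notMem fun hmem =>
      hg (Set.mul_subset_mul_left (Set.singleton_subset_iff.2 hh) hmem)
  rintro a (rfl | ha) b (rfl | hb) hab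
  · exact absurd rfl hab
  · exact hgS b hb
  · exact (hgS a ha).symm
  · exact hS a ha b hb hab

theorem exists_dSeparated_translates (hD : D.Finite) {T : Set G} (hT : T.Infinite)
    (t : Finset G) : ∃ S : Set G, S.Finite ∧ DSeparated G D S ∧ ∀ g ∈ t, ∃ τ ∈ T, τ * g ∈ S := by
  classical
  induction t using Finset.induction_on with
  | empty => exact ⟨∅, Set.finite_empty, fun _ h => h.elim, by simp⟩
  | insert a t _ ih =>
    obtain ⟨S, hSfin, hSsep, hSt⟩ := ih
    have hbad : (D⁻¹ * D * S).Finite := (hD.inv.mul hD).mul hSfin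
    obtain ⟨τ, hτT, hτa⟩ := (hT.sdiff (hbad.preimage (mul_left_injective a).injOn)).nonempty
    refine ⟨insert (τ * a) S, hSfin.insert _, hSsep.insert hτa, ?_⟩
    simp only [Finset.mem_insert, forall_eq_or_imp]
    exact ⟨⟨τ, hτT, Set.mem_insert _ _⟩,
      fun g hg => (hSt g hg).imp fun _ => And.imp_right (Set.mem_insert_of_mem _)⟩

end Separated

section Subflow

variable {G : Type*} [Group G] {X : Type*} [TopologicalSpace X] [MulAction G X]

instance SubMulAction.continuousConstSMul [ContinuousConstSMul G X] (M : SubMulAction G X) :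
    ContinuousConstSMul G M :=
  ⟨fun g => ((continuous_const_smul g).comp continuous_subtype_val).subtype_mk _⟩

theorem exists_isMinimal_subMulAction [CompactSpace X] [ContinuousConstSMul G X] {A : Set X}
    (hA : IsClosed A) (hne : A.Nonempty) (hinv : ∀ g : G, ∀ x ∈ A, g • x ∈ A) :
    ∃ M : SubMulAction G X, (M : Set X) ⊆ A ∧ IsClosed (M : Set X) ∧ (M : Set X).Nonempty ∧
      MulAction.IsMinimal G M := by
  let S : Set (Set X) := {B | B ⊆ A ∧ IsClosed B ∧ B.Nonempty ∧ ∀ g : G, ∀ x ∈ B, g • x ∈ B}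
  have hchain : ∀ c ⊆ S, IsChain (· ⊆ ·) c → c.Nonempty → ∃ lb ∈ S, ∀ B ∈ c, lb ⊆ B := by
    intro c hcS hc ⟨B₀, hB₀⟩
    have : Nonempty c := ⟨⟨B₀, hB₀⟩⟩
    have hdir : DirectedOn (· ⊇ ·) c := fun B hB B' hB' =>
      (hc.total hB hB').elim (fun h => ⟨B, hB, subset_rfl, h⟩) fun h => ⟨B', hB', h, subset_rfl⟩
    refine ⟨⋂₀ c, ⟨(Set.sInter_subset_of_mem hB₀).trans (hcS hB₀).1,
      isClosed_sInter fun B hB => (hcS hB).2.1, ?_, fun g x hx => ?_⟩,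
      fun B hB => Set.sInter_subset_of_mem hB⟩
    · exact IsCompact.nonempty_sInter_of_directed_nonempty_isCompact_isClosed hdir
        (fun B hB => (hcS hB).2.2.1) (fun B hB => (hcS hB).2.1.isCompact) (fun B hB => (hcS hB).2.1)
    · exact Set.mem_sInter.2 fun B hB => (hcS hB).2.2.2 g x (hx B hB)
  obtain ⟨M, -, hM⟩ := zorn_superset_nonempty S hchain A ⟨subset_rfl, hA, hne, hinv⟩
  obtain ⟨hMA, hMcl, hMne, hMinv⟩ := hM.prop
  refine ⟨⟨M, fun g _ hx => hMinv g _ hx⟩, hMA, hMcl, hMne, ⟨fun x => Subtype.dense_iff.2 ?_⟩⟩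
  rw [SubMulAction.val_image_orbit]
  have horb : closure (MulAction.orbit G (x : X)) ⊆ M :=
    closure_minimal (by rintro _ ⟨g, rfl⟩; exact hMinv g x x.2) hMcl
  exact hM.2 ⟨horb.trans hMA, isClosed_closure, ⟨x, subset_closure (MulAction.mem_orbit_self _)⟩,
    fun g y hy => smul_closure_orbit_subset g (x : X) (Set.smul_mem_smul_set hy)⟩ horb

theorem scp_of_forall_isOpen [CompactSpace X] [ContinuousConstSMul G X] [MulAction.IsMinimal G X]
    (h : ∀ U : Set X, IsOpen U → U.Nonempty → ∃ V : Set X, IsOpen V ∧ V.Nonempty ∧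
      ∃ T : Set G, T.Infinite ∧ ∀ τ ∈ T, ∀ x ∈ V, τ • x ∈ U) :
    SCP G X := by
  intro D hD U hU hUne
  obtain ⟨V, hV, hVne, T, hT, hTV⟩ := h U hU hUne
  obtain ⟨t, ht⟩ := isCompact_univ.elim_finite_subcover (fun g : G => (g • ·) ⁻¹' V)
    (fun g => hV.preimage (continuous_const_smul g)) (hV.iUnion_preimage_smul G hVne).ge
  obtain ⟨S, -, hSsep, hSt⟩ := exists_dSeparated_translates hD hT t
  refine ⟨S, hSsep, fun x => ?_⟩
  obtain ⟨g, hg, hgx⟩ := Set.mem_iUnion₂.1 (ht (Set.mem_univ x))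
  obtain ⟨τ, hτ, hτg⟩ := hSt g hg
  exact ⟨τ * g, hτg, by rw [mul_smul]; exact hTV τ hτ _ hgx⟩

end Subflow

theorem exists_free_minimal_SCP_subflow {G : Type u} [Group G] {Ω : Type u} [TopologicalSpace Ω]
    [CompactSpace Ω] [T2Space Ω] [MulAction G Ω] [ContinuousConstSMul G Ω] {A : Set Ω}
    (hA : IsClosed A) (hne : A.Nonempty) (hinv : ∀ g : G, ∀ x ∈ A, g • x ∈ A)
    (hfree : ∀ g : G, ∀ x ∈ A, g • x = x → g = 1)
    (hsmall : ∀ x ∈ A, ∀ U ∈ 𝓝 x, ∃ V ∈ 𝓝 x, ∃ T : Set G, T.Infinite ∧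
      ∀ τ ∈ T, ∀ y ∈ A, y ∈ V → τ • y ∈ U) :
    ∃ X : GFlow G,
      CompactSpace X.carrier ∧ T2Space X.carrier ∧ Nonempty X.carrier ∧
      ContinuousConstSMul G X.carrier ∧ IsMinimalFlow G X.carrier ∧
      (∀ (g : G) (x : X.carrier), g • x = x → g = 1) ∧
      SCP G X.carrier := by
  obtain ⟨M, hMA, hMcl, hMne, hmin⟩ := exists_isMinimal_subMulAction hA hne hinv
  have hMcpt : CompactSpace M := isCompact_iff_compactSpace.1 hMcl.isCompact
  have hscp : SCP G M := scp_of_forall_isOpen fun U hU ⟨p, hp⟩ => by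
    obtain ⟨U', hU', rfl⟩ := isOpen_induced_iff.1 hU
    obtain ⟨V, hV, T, hT, hTV⟩ := hsmall p (hMA p.2) U' (hU'.mem_nhds hp)
    exact ⟨Subtype.val ⁻¹' interior V, isOpen_interior.preimage continuous_subtype_val,
      ⟨p, mem_interior_iff_mem_nhds.2 hV⟩, T, hT,
      fun τ hτ y hy => hTV τ hτ y (hMA y.2) (interior_subset hy)⟩
  exact ⟨⟨M⟩, hMcpt, inferInstance, hMne.to_subtype, inferInstance, MulAction.dense_orbit G,
    fun g x hx => hfree g x (hMA x.2) (congrArg Subtype.val hx), hscp⟩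

theorem MonoidHom.infinite_preimage_of_mem_nhds_one {Γ L : Type*} [Group Γ] [Infinite Γ] [Group L]
    [TopologicalSpace L] [IsTopologicalGroup L] [CompactSpace L] (c : Γ →* L) {W : Set L}
    (hW : W ∈ 𝓝 1) : (c ⁻¹' W).Infinite := by
  -- If `c a` and `c b` are near a cluster point of `c` along `cofinite`, then `c (a⁻¹ * b) ∈ W`.
  obtain ⟨x, hx⟩ := exists_clusterPt_of_compactSpace (map c cofinite)
  have hdiv : ∀ᶠ p in 𝓝 x ×ˢ 𝓝 x, p.1⁻¹ * p.2 ∈ W := by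
    rw [← nhds_prod_eq]
    exact (continuous_fst.inv.mul continuous_snd).continuousAt.preimage_mem_nhds (by simpa)
  obtain ⟨N, hN, hNW⟩ := (eventually_prod_self_iff (r := fun a b => a⁻¹ * b ∈ W)).1 hdiv
  have hNinf : (c ⁻¹' N).Infinite := frequently_cofinite_iff_infinite.1 (hx.frequently hN)
  obtain ⟨a, ha⟩ := hNinf.nonempty
  refine (hNinf.image (mul_right_injective a⁻¹).injOn).mono ?_
  rintro _ ⟨b, hb, rfl⟩
  simpa using hNW _ ha _ hb

instance shiftContinuousConstSMul {G : Type*} [Group G] (A : Type*) [TopologicalSpace A] :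
    ContinuousConstSMul G (G → A) :=
  ⟨fun g => continuous_pi fun h => continuous_apply (h * g)⟩

section Coinduced

variable {G : Type*} [Group G] {H : Subgroup G} {K : Type*} [Group K]

def MonoidHom.coind (f : H →* K) : Set (G → K) :=
  {z | ∀ (h : H) (x : G), z (h * x) = f h * z x}

namespace MonoidHom

variable (f : H →* K) {z : G → K}

theorem isClosed_coind [TopologicalSpace K] [ContinuousMul K] [T2Space K] :
    IsClosed f.coind := by
  simp only [coind, Set.ofPred_forall]
  exact isClosed_iInter fun h => isClosed_iInter fun x =>
    isClosed_eq (continuous_apply _) (continuous_const.mul (continuous_apply _))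

theorem smul_mem_coind (g : G) (hz : z ∈ f.coind) : g • z ∈ f.coind := fun h x => by
  change z (h * x * g) = f h * z (x * g)
  rw [mul_assoc, hz]

theorem coind_nonempty : f.coind.Nonempty := by
  let rep (x : G) : G := (Quotient.mk (QuotientGroup.rightRel H) x).out
  have hrep (x : G) : x * (rep x)⁻¹ ∈ H := QuotientGroup.rightRel_apply.1 (Quotient.mk_out x)
  refine ⟨fun x => f ⟨x * (rep x)⁻¹, hrep x⟩, fun h x => ?_⟩
  have hsame : rep (h * x) = rep x :=
    congrArg Quotient.out <| Quotient.sound <| QuotientGroup.rightRel_apply.2 <| by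
      simp [H.inv_mem h.2]
  rw [← map_mul]
  refine congrArg f (Subtype.ext ?_)
  simp only [Subgroup.coe_mul, hsame, mul_assoc]

theorem eq_one_of_smul_eq_self (hz : z ∈ f.coind) {h : H} (hh : (h : G) • z = z) : f h = 1 := by
  have hfix : z (1 * h) = z 1 := congrFun hh 1
  rwa [one_mul, ← mul_one (h : G), hz, mul_eq_right] at hfix

variable [H.Normal]

def conjPi : H →* (G → K) :=
  MonoidHom.pi fun x => f.comp (MulAut.conjNormal x).toMonoidHom

theorem smul_eq_conjPi_mul (hz : z ∈ f.coind) (h : H) : (h : G) • z = f.conjPi h * z := by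
  funext x
  change z (x * h) = f (MulAut.conjNormal x h) * z x
  rw [← hz]
  congr 1
  simp [MulAut.conjNormal_apply]

end MonoidHom

end Coinduced

section CoinducedProduct

variable {G : Type*} [Group G] {H : Subgroup G} {K : Type*} [Group K] (f : H →* K)
  {Z : Type*} [MulAction G Z]

theorem MonoidHom.exists_nhds_infinite_smul_mem [H.Normal] [Infinite H] [TopologicalSpace K]
    [IsTopologicalGroup K] [CompactSpace K] [TopologicalSpace Z]
    (hZ : ∀ h ∈ H, ∀ u : Z, h • u = u) (p : (G → K) × Z) {U : Set ((G → K) × Z)} (hU : U ∈ 𝓝 p) :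
    ∃ V ∈ 𝓝 p, ∃ T : Set G, T.Infinite ∧
      ∀ τ ∈ T, ∀ y ∈ f.coind ×ˢ (Set.univ : Set Z), y ∈ V → τ • y ∈ U := by
  let Φ : (G → K) × ((G → K) × Z) → (G → K) × Z := fun q => (q.1 * q.2.1, q.2.2)
  have hΦ : Φ ⁻¹' U ∈ 𝓝 ((1 : G → K), p) :=
    (by fun_prop : Continuous Φ).continuousAt.preimage_mem_nhds (by simpa [Φ] using hU)
  obtain ⟨W, hW, V, hV, hWV⟩ := mem_nhds_prod_iff.1 hΦ
  refine ⟨V, hV, Subtype.val '' (f.conjPi ⁻¹' W),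
    (f.conjPi.infinite_preimage_of_mem_nhds_one hW).image Subtype.val_injective.injOn, ?_⟩
  rintro _ ⟨h, hhW, rfl⟩ ⟨z, u⟩ ⟨hz, -⟩ hy
  have hact : (h : G) • (z, u) = Φ (f.conjPi h, (z, u)) :=
    Prod.ext (f.smul_eq_conjPi_mul hz h) (hZ h h.2 u)
  rw [hact]
  exact hWV ⟨hhW, hy⟩

theorem MonoidHom.eq_one_of_smul_eq_self_of_mem_coind_prod [H.Normal] (hf : Function.Injective f)
    {g : G} {p : (G → K) × Ultrafilter (G ⧸ H)} (hp : p ∈ f.coind ×ˢ Set.univ) (hgp : g • p = p) :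
    g = 1 := by
  have hg : g ∈ H := Ultrafilter.mem_of_smul_quotient_eq_self (congrArg Prod.snd hgp)
  have hfg : f ⟨g, hg⟩ = 1 := f.eq_one_of_smul_eq_self hp.1 (congrArg Prod.fst hgp)
  exact congrArg Subtype.val (hf (hfg.trans f.map_one.symm))

end CoinducedProduct

theorem exists_free_minimal_SCP_flow_of_normal_maxap_subgroup_general
    {G : Type u} [Group G]
    (H : Subgroup G) (hHnormal : H.Normal) (hHinf : (H : Set G).Infinite)
    (hHmaxap : IsMaxap (↥H)) :
    ∃ X : GFlow G,
      CompactSpace X.carrier ∧ T2Space X.carrier ∧ Nonempty X.carrier ∧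
      ContinuousConstSMul G X.carrier ∧ IsMinimalFlow G X.carrier ∧
      (∀ (g : G) (x : X.carrier), g • x = x → g = 1) ∧
      SCP G X.carrier := by
  obtain ⟨K, f, hf⟩ := hHmaxap
  have : Infinite H := hHinf.to_subtype
  exact exists_free_minimal_SCP_subflow (Ω := (G → K.carrier) × Ultrafilter (G ⧸ H))
    (f.isClosed_coind.prod isClosed_univ) (f.coind_nonempty.prod Set.univ_nonempty)
    (fun g p hp => ⟨f.smul_mem_coind g hp.1, trivial⟩)
    (fun _ p hp hgp => f.eq_one_of_smul_eq_self_of_mem_coind_prod hf hp hgp)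
    (fun p _ _ hU => f.exists_nhds_infinite_smul_mem
      (fun _ hh => Ultrafilter.smul_quotient_eq_self_of_mem hh) p hU)

/-- If an infinite discrete group `G` admits an infinite normal subgroup
`H` which is maximally almost periodic, then `G` admits a free, minimal `G`-flow with the
separated covering property. -/
theorem exists_free_minimal_SCP_flow_of_normal_maxap_subgroup
    {G : Type u} [Group G] [Infinite G]
    (H : Subgroup G) (hHnormal : H.Normal) (hHinf : (H : Set G).Infinite)
    (hHmaxap : IsMaxap (↥H)) :
    ∃ X : GFlow G,
      CompactSpace X.carrier ∧ T2Space X.carrier ∧ Nonempty X.carrier ∧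
      ContinuousConstSMul G X.carrier ∧ IsMinimalFlow G X.carrier ∧
      (∀ (g : G) (x : X.carrier), g • x = x → g = 1) ∧
      SCP G X.carrier :=
  exists_free_minimal_SCP_flow_of_normal_maxap_subgroup_general H hHnormal hHinf hHmaxap
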